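/- arXiv:1903.07494 — 2 statements merged into one kernel-verified Lean document; each statement's English description precedes it below -/
import Mathlib

section
/- Let H = ⊕_{x∈ℤ} H_x be an orthogonal decomposition of a complex Hilbert space into finite-dimensional subspaces (cells), let W be a unitary operator on H, and let λ be an eigenvalue of W whose eigenspace H^(λ) is finite-dimensional. Then there exists n ≥ 0 such that H^(λ) is contained in the cyclic subspace generated by the finite sum of cells S_n = ⊕_{|x|≤n} H_x with respect to W. In particular, if the eigenspaces ker(W − 1) and ker(W + 1) are finite-dimensional, there is a finite sum of cells whose cyclic subspace contains both of them. -/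
open Complex Filter Set Metric

variable {H : Type*} [NormedAddCommGroup H] [InnerProductSpace ℂ H] [CompleteSpace H]

/-- The orthogonal projection of `H` onto `K`, as an operator on `H`. -/
noncomputable def orthProj (K : Submodule ℂ H) [K.HasOrthogonalProjection] : H →L[ℂ] H :=
  K.subtypeL ∘L K.orthogonalProjectionOnto

/-- The Schur function of the subspace `K` with respect to the operator `W`,
`f(z) = P_C (W - z P_C^⊥)⁻¹ P_C`, with values regarded as operators on `K`.
(For `z` in the open unit disk and `W` unitary, `W - z P_C^⊥` is invertible,
so `Ring.inverse` gives the genuine inverse there.) -/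
noncomputable def schurAt (W : H →L[ℂ] H) (K : Submodule ℂ H) [K.HasOrthogonalProjection]
    (z : ℂ) : K →L[ℂ] K :=
  K.orthogonalProjectionOnto ∘L Ring.inverse (W - z • (1 - orthProj K)) ∘L K.subtypeL

/-- The cyclic subspace generated by `K` with respect to `W`: the closure of the span of
all `Wⁿ K`, `n ∈ ℤ` (for unitary `W`, negative powers are powers of `star W`). -/
noncomputable def cyclicSubspace (W : H →L[ℂ] H) (K : Submodule ℂ H) : Submodule ℂ H :=
  (⨆ n : ℕ, Submodule.map ((W ^ n : H →L[ℂ] H) : H →ₗ[ℂ] H) K ⊔ Submodule.map (((star W) ^ n : H →L[ℂ] H) : H →ₗ[ℂ] H) K).topologicalClosure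

/-- An open arc of the unit circle. -/
def IsOpenArc (Γ : Set ℂ) : Prop :=
  ∃ a b : ℝ, a < b ∧ b - a < 2 * Real.pi ∧
    Γ = (fun θ : ℝ => Complex.exp (θ * Complex.I)) '' Set.Ioo a b

/-- `lam` lies in an essential gap of `W`: some open arc of the unit circle containing
`lam` meets the spectrum of `W` only in isolated eigenvalues of finite multiplicity. -/
def InEssentialGap (W : H →L[ℂ] H) (lam : ℂ) : Prop :=
  ∃ Γ : Set ℂ, IsOpenArc Γ ∧ lam ∈ Γ ∧
    ∀ μ ∈ Γ ∩ spectrum ℂ W,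
      (∃ U : Set ℂ, IsOpen U ∧ μ ∈ U ∧ U ∩ spectrum ℂ W ⊆ {μ}) ∧
      LinearMap.ker ((W - μ • (1 : H →L[ℂ] H) : H →L[ℂ] H) : H →ₗ[ℂ] H) ≠ ⊥ ∧
      FiniteDimensional ℂ (LinearMap.ker ((W - μ • (1 : H →L[ℂ] H) : H →L[ℂ] H) : H →ₗ[ℂ] H))

set_option linter.unusedSectionVars false

lemma map_mul_submodule (W A : H →L[ℂ] H) (K : Submodule ℂ H) :
    Submodule.map ((W * A : H →L[ℂ] H) : H →ₗ[ℂ] H) K = Submodule.map (W : H →ₗ[ℂ] H) (Submodule.map (A : H →ₗ[ℂ] H) K) := by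
  ext x; simp [Submodule.mem_map, ContinuousLinearMap.mul_apply]

lemma map_pow_zero (W : H →L[ℂ] H) (K : Submodule ℂ H) :
    Submodule.map ((W ^ 0 : H →L[ℂ] H) : H →ₗ[ℂ] H) K = K := by
  ext x; simp

lemma le_cyclic (W : H →L[ℂ] H) (K : Submodule ℂ H) : K ≤ cyclicSubspace W K := by
  refine le_trans ?_ (Submodule.le_topologicalClosure _)
  refine le_trans ?_
    (le_iSup (fun n => Submodule.map ((W ^ n : H →L[ℂ] H) : H →ₗ[ℂ] H) K ⊔ Submodule.map (((star W) ^ n : H →L[ℂ] H) : H →ₗ[ℂ] H) K) 0)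
  rw [map_pow_zero]
  exact le_sup_left

lemma cyclic_mono (W : H →L[ℂ] H) {K K' : Submodule ℂ H} (h : K ≤ K') :
    cyclicSubspace W K ≤ cyclicSubspace W K' := by
  apply Submodule.topologicalClosure_mono
  exact iSup_mono fun n => sup_le_sup (Submodule.map_mono h) (Submodule.map_mono h)

lemma cyclic_invariant_aux (W V : H →L[ℂ] H) (hWV : W * V = 1)
    (K : Submodule ℂ H) :
    Submodule.map (W : H →ₗ[ℂ] H) (⨆ n : ℕ, Submodule.map ((W ^ n : H →L[ℂ] H) : H →ₗ[ℂ] H) K ⊔ Submodule.map ((V ^ n : H →L[ℂ] H) : H →ₗ[ℂ] H) K) ≤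
      ⨆ n : ℕ, Submodule.map ((W ^ n : H →L[ℂ] H) : H →ₗ[ℂ] H) K ⊔ Submodule.map ((V ^ n : H →L[ℂ] H) : H →ₗ[ℂ] H) K := by
  set f : ℕ → Submodule ℂ H := fun n => Submodule.map ((W ^ n : H →L[ℂ] H) : H →ₗ[ℂ] H) K ⊔ Submodule.map ((V ^ n : H →L[ℂ] H) : H →ₗ[ℂ] H) K with hf
  rw [Submodule.map_iSup]
  refine iSup_le fun n => ?_
  rw [hf, Submodule.map_sup]
  apply sup_le
  · rw [← map_mul_submodule, ← pow_succ']
    exact le_trans le_sup_left (le_iSup f (n + 1))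
  · cases n with
    | zero =>
        rw [map_pow_zero, ← pow_one W]
        exact le_trans le_sup_left (le_iSup f 1)
    | succ m =>
        have h1 : W * V ^ (m + 1) = V ^ m := by
          rw [pow_succ', ← mul_assoc, hWV, one_mul]
        rw [← map_mul_submodule, h1]
        exact le_trans le_sup_right (le_iSup f m)

lemma map_closure_le (f : H →L[ℂ] H) (C : Submodule ℂ H) (h : Submodule.map (f : H →ₗ[ℂ] H) C ≤ C) :
    ∀ v ∈ C.topologicalClosure, f v ∈ C.topologicalClosure := fun v hv =>
  Submodule.topologicalClosure_mono h (Submodule.topologicalClosure_map f C ⟨v, hv, rfl⟩)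

lemma cyclic_invariant (W : H →L[ℂ] H) (hW : W ∈ unitary (H →L[ℂ] H)) (K : Submodule ℂ H) :
    ∀ v ∈ cyclicSubspace W K, W v ∈ cyclicSubspace W K :=
  map_closure_le W _ (cyclic_invariant_aux W (star W) hW.2 K)

lemma cyclic_star_invariant (W : H →L[ℂ] H) (hW : W ∈ unitary (H →L[ℂ] H)) (K : Submodule ℂ H) :
    ∀ v ∈ cyclicSubspace W K, (star W) v ∈ cyclicSubspace W K := by
  have h1 := cyclic_invariant_aux (star W) W hW.1 K
  have hswap : (⨆ n : ℕ, Submodule.map (((star W) ^ n : H →L[ℂ] H) : H →ₗ[ℂ] H) K ⊔ Submodule.map ((W ^ n : H →L[ℂ] H) : H →ₗ[ℂ] H) K)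
      = ⨆ n : ℕ, Submodule.map ((W ^ n : H →L[ℂ] H) : H →ₗ[ℂ] H) K ⊔ Submodule.map (((star W) ^ n : H →L[ℂ] H) : H →ₗ[ℂ] H) K :=
    iSup_congr fun n => sup_comm _ _
  rw [hswap] at h1
  exact map_closure_le (star W) _ h1

/-- Eigenvector decomposition lemma. -/
lemma eig_decomp (W : H →L[ℂ] H) (K : Submodule ℂ H)
    [K.HasOrthogonalProjection]
    (hK : ∀ v ∈ K, W v ∈ K) (hK' : ∀ v ∈ K, (star W) v ∈ K) (lam : ℂ)
    (v : H) (hv : v ∈ LinearMap.ker ((W - lam • (1 : H →L[ℂ] H) : H →L[ℂ] H) : H →ₗ[ℂ] H)) :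
    v - (K.subtypeL (K.orthogonalProjectionOnto v)) ∈ LinearMap.ker ((W - lam • (1 : H →L[ℂ] H) : H →L[ℂ] H) : H →ₗ[ℂ] H) ∧
    v - (K.subtypeL (K.orthogonalProjectionOnto v)) ∈ Kᗮ := by
  set p : H := K.subtypeL (K.orthogonalProjectionOnto v) with hp
  have hpK : p ∈ K := (K.orthogonalProjectionOnto v).2
  have hw : v - p ∈ Kᗮ := K.sub_starProjection_mem_orthogonal v
  refine ⟨?_, hw⟩
  have horthW : ∀ u ∈ Kᗮ, W u ∈ Kᗮ := by
    intro u hu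
    rw [Submodule.mem_orthogonal]
    intro k hk
    have h1 : (inner ℂ k (W u) : ℂ) = inner ℂ ((star W) k) u := by
      rw [ContinuousLinearMap.star_eq_adjoint]
      exact (ContinuousLinearMap.adjoint_inner_left W u k).symm
    rw [h1]
    exact (Submodule.mem_orthogonal K u).mp hu _ (hK' k hk)
  -- (W - lam) (v - p) ∈ Kᗮ and = -(W - lam) p ∈ K
  have hker : (W - lam • (1 : H →L[ℂ] H)) v = 0 := LinearMap.mem_ker.mp hv
  have happ : (W - lam • (1 : H →L[ℂ] H)) (v - p) = -( (W - lam • (1 : H →L[ℂ] H)) p) := by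
    rw [map_sub, hker, zero_sub]
  have hinK : (W - lam • (1 : H →L[ℂ] H)) (v - p) ∈ K := by
    rw [happ]
    refine neg_mem ?_
    have : (W - lam • (1 : H →L[ℂ] H)) p = W p - lam • p := by
      simp [ContinuousLinearMap.sub_apply, ContinuousLinearMap.smul_apply]
    rw [this]
    exact sub_mem (hK p hpK) (Submodule.smul_mem _ _ hpK)
  have hinKo : (W - lam • (1 : H →L[ℂ] H)) (v - p) ∈ Kᗮ := by
    have : (W - lam • (1 : H →L[ℂ] H)) (v - p) = W (v - p) - lam • (v - p) := by
      simp [ContinuousLinearMap.sub_apply, ContinuousLinearMap.smul_apply]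
    rw [this]
    exact sub_mem (horthW _ hw) (Submodule.smul_mem _ _ hw)
  have : (W - lam • (1 : H →L[ℂ] H)) (v - p) ∈ K ⊓ Kᗮ := ⟨hinK, hinKo⟩
  rw [Submodule.inf_orthogonal_eq_bot K] at this
  exact LinearMap.mem_ker.mpr this

lemma S_mono (Hx : ℤ → Submodule ℂ H) {n m : ℕ} (h : n ≤ m) :
    (⨆ x ∈ {y : ℤ | |y| ≤ (n : ℤ)}, Hx x) ≤ ⨆ x ∈ {y : ℤ | |y| ≤ (m : ℤ)}, Hx x := by
  refine iSup₂_le fun x hx => le_iSup₂ (f := fun (x : ℤ) (_ : x ∈ {y : ℤ | |y| ≤ (m : ℤ)}) => Hx x)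
    x ?_
  simp only [Set.mem_setOf_eq] at hx ⊢
  exact hx.trans (by exact_mod_cast h)

set_option maxHeartbeats 1000000 in
lemma main_aux (Hx : ℤ → Submodule ℂ H)
    (hdense : (⨆ x : ℤ, Hx x).topologicalClosure = ⊤)
    (W : H →L[ℂ] H) (hW : W ∈ unitary (H →L[ℂ] H)) (lam : ℂ)
    (hfd : FiniteDimensional ℂ (LinearMap.ker ((W - lam • (1 : H →L[ℂ] H) : H →L[ℂ] H) : H →ₗ[ℂ] H))) :
    ∃ n : ℕ, LinearMap.ker ((W - lam • (1 : H →L[ℂ] H) : H →L[ℂ] H) : H →ₗ[ℂ] H) ≤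
      cyclicSubspace W (⨆ x ∈ {y : ℤ | |y| ≤ (n : ℤ)}, Hx x) := by
  set E : Submodule ℂ H := LinearMap.ker ((W - lam • (1 : H →L[ℂ] H) : H →L[ℂ] H) : H →ₗ[ℂ] H) with hE
  set S : ℕ → Submodule ℂ H := fun n => ⨆ x ∈ {y : ℤ | |y| ≤ (n : ℤ)}, Hx x with hS
  set C : ℕ → Submodule ℂ H := fun n => cyclicSubspace W (S n) with hC
  have hCdef : ∀ n, C n = (⨆ k : ℕ, Submodule.map ((W ^ k : H →L[ℂ] H) : H →ₗ[ℂ] H) (S n)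
      ⊔ Submodule.map (((star W) ^ k : H →L[ℂ] H) : H →ₗ[ℂ] H) (S n)).topologicalClosure := fun n => rfl
  haveI hproj : ∀ n, (C n).HasOrthogonalProjection := fun n => hCdef n ▸ inferInstance
  set D : ℕ → Submodule ℂ H := fun n => E ⊓ (C n)ᗮ with hD
  have hCmono : ∀ {n m : ℕ}, n ≤ m → C n ≤ C m := fun h => cyclic_mono W (S_mono Hx h)
  have hDanti : ∀ {n m : ℕ}, n ≤ m → D m ≤ D n := fun h =>
    inf_le_inf_left E (Submodule.orthogonal_le (hCmono h))
  -- any vector in all D n is zero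
  have hDbot : ∀ v : H, (∀ n, v ∈ D n) → v = 0 := by
    intro v hv
    have h1 : ∀ x : ℤ, v ∈ (Hx x)ᗮ := by
      intro x
      have h2 : Hx x ≤ S x.natAbs := by
        refine le_iSup₂ (f := fun (y : ℤ) (_ : y ∈ {y : ℤ | |y| ≤ (x.natAbs : ℤ)}) => Hx y) x ?_
        simp only [Set.mem_setOf_eq]
        exact le_of_eq (Int.abs_eq_natAbs x)
      have h3 : v ∈ (S x.natAbs)ᗮ :=
        Submodule.orthogonal_le (le_cyclic W (S x.natAbs)) (hv x.natAbs).2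
      exact Submodule.orthogonal_le h2 h3
    have h4 : v ∈ (⨆ x : ℤ, Hx x)ᗮ := by
      rw [← Submodule.iInf_orthogonal]
      exact Submodule.mem_iInf _ |>.mpr h1
    rw [Submodule.topologicalClosure_eq_top_iff.mp hdense] at h4
    exact h4
  haveI hDfd : ∀ n, FiniteDimensional ℂ (D n) := fun n =>
    Submodule.finiteDimensional_of_le (inf_le_left : D n ≤ E)
  -- choose N with minimal finrank
  obtain ⟨M, hM⟩ := Nat.sInf_mem (Set.range_nonempty (fun n => Module.finrank ℂ (D n)))
  have hmin : ∀ n, Module.finrank ℂ (D M) ≤ Module.finrank ℂ (D n) := by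
    intro n
    calc Module.finrank ℂ (D M)
        = sInf (Set.range fun k => Module.finrank ℂ (D k)) := hM
      _ ≤ Module.finrank ℂ (D n) := Nat.sInf_le ⟨n, rfl⟩
  have hstab : ∀ m, D M ≤ D m := by
    intro m
    have h1 : D (max M m) ≤ D M := hDanti (le_max_left M m)
    have h2 : D (max M m) = D M :=
      Submodule.eq_of_le_of_finrank_le h1 (hmin (max M m))
    exact h2 ▸ hDanti (le_max_right M m)
  have hDN : D M = ⊥ := by
    rw [eq_bot_iff]
    intro v hv
    have : v = 0 := hDbot v fun n => hstab n hv
    simpa [this]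
  refine ⟨M, fun v hv => ?_⟩
  obtain ⟨hker, horth⟩ := eig_decomp W (C M) (cyclic_invariant W hW (S M))
    (cyclic_star_invariant W hW (S M)) lam v hv
  have hw : v - ((C M).subtypeL ((C M).orthogonalProjectionOnto v)) ∈ D M := ⟨hker, horth⟩
  rw [hDN, Submodule.mem_bot, sub_eq_zero] at hw
  rw [hw]
  exact (((C M).orthogonalProjectionOnto v)).2

/-- Let `H = ⊕_{x ∈ ℤ} H_x` be a cell structure (finite-dimensional,
pairwise orthogonal cells with dense span) and `W` unitary. Every finite-dimensional
eigenspace of `W` is contained in the cyclic subspace generated by some finite sum of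
cells `S_n = ⊕_{|x| ≤ n} H_x`; in particular, if `ker (W - 1)` and `ker (W + 1)` are
finite-dimensional, some finite sum of cells generates a cyclic subspace containing
both. -/
theorem statement9
    (Hx : ℤ → Submodule ℂ H)
    (hfd : ∀ x : ℤ, FiniteDimensional ℂ (Hx x))
    (horth : ∀ x y : ℤ, x ≠ y → ∀ u ∈ Hx x, ∀ v ∈ Hx y, (inner ℂ u v : ℂ) = 0)
    (hdense : (⨆ x : ℤ, Hx x).topologicalClosure = ⊤)
    (W : H →L[ℂ] H) (hW : W ∈ unitary (H →L[ℂ] H)) :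
    (∀ lam : ℂ,
      LinearMap.ker ((W - lam • (1 : H →L[ℂ] H) : H →L[ℂ] H) : H →ₗ[ℂ] H) ≠ ⊥ →
      FiniteDimensional ℂ (LinearMap.ker ((W - lam • (1 : H →L[ℂ] H) : H →L[ℂ] H) : H →ₗ[ℂ] H)) →
      ∃ n : ℕ, LinearMap.ker ((W - lam • (1 : H →L[ℂ] H) : H →L[ℂ] H) : H →ₗ[ℂ] H) ≤
        cyclicSubspace W (⨆ x ∈ {y : ℤ | |y| ≤ (n : ℤ)}, Hx x)) ∧
    (FiniteDimensional ℂ (LinearMap.ker ((W - 1 : H →L[ℂ] H) : H →ₗ[ℂ] H)) →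
     FiniteDimensional ℂ (LinearMap.ker ((W + 1 : H →L[ℂ] H) : H →ₗ[ℂ] H)) →
      ∃ n : ℕ,
        LinearMap.ker ((W - 1 : H →L[ℂ] H) : H →ₗ[ℂ] H) ≤
          cyclicSubspace W (⨆ x ∈ {y : ℤ | |y| ≤ (n : ℤ)}, Hx x) ∧
        LinearMap.ker ((W + 1 : H →L[ℂ] H) : H →ₗ[ℂ] H) ≤
          cyclicSubspace W (⨆ x ∈ {y : ℤ | |y| ≤ (n : ℤ)}, Hx x)) := by
  
  constructor
  · intro lam _ hfd'
    exact main_aux Hx hdense W hW lam hfd'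
  · intro h1 h2
    have e1 : (W - 1 : H →L[ℂ] H) = W - (1:ℂ) • (1 : H →L[ℂ] H) := by rw [one_smul]
    have e2 : (W + 1 : H →L[ℂ] H) = W - (-1:ℂ) • (1 : H →L[ℂ] H) := by
      rw [neg_smul, one_smul, sub_neg_eq_add]
    rw [e1] at h1 ⊢
    rw [e2] at h2 ⊢
    obtain ⟨n1, hn1⟩ := main_aux Hx hdense W hW 1 h1
    obtain ⟨n2, hn2⟩ := main_aux Hx hdense W hW (-1) h2
    exact ⟨max n1 n2, le_trans hn1 (cyclic_mono W (S_mono Hx (le_max_left n1 n2))),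
      le_trans hn2 (cyclic_mono W (S_mono Hx (le_max_right n1 n2)))⟩
end

section
/- Let W and V be unitary operators on a complex Hilbert space H, let H_V denote the closure of the range of V − 1 (the perturbation subspace of V), and let H_C be a closed subspace with H_V ⊂ H_C. Then H_C is V-invariant, and the Schur functions f of H_C with respect to W and f̃ of H_C with respect to VW are related by f̃(z) = f(z) V_C* for all z in the open unit disk, where V_C = V|_{H_C}. -/
open Complex Filter Set Metric

variable {H : Type*} [NormedAddCommGroup H] [InnerProductSpace ℂ H] [CompleteSpace H]

/-- If the perturbation subspace `H_V = closure (range (V - 1))` of a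
unitary `V` is contained in a closed subspace `H_C`, then `H_C` is `V`-invariant and the
Schur functions of `H_C` with respect to `W` and `VW` are related by `f̃(z) = f(z) V_C*`,
where `V_C* = V*|_{H_C}` is realized as the compression of `star V` to `H_C` (which
coincides with the restriction since `H_C` is `V*`-invariant). -/
theorem statement10
    (W V : H →L[ℂ] H) (hW : W ∈ unitary (H →L[ℂ] H)) (hV : V ∈ unitary (H →L[ℂ] H))
    (HC : Submodule ℂ H) [CompleteSpace HC]
    (hHV : (LinearMap.range ((V - 1 : H →L[ℂ] H) : H →ₗ[ℂ] H)).topologicalClosure ≤ HC) :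
    (∀ v ∈ HC, V v ∈ HC) ∧
    ∀ z : ℂ, ‖z‖ < 1 →
      schurAt (V ∘L W) HC z =
        schurAt W HC z ∘L (HC.orthogonalProjectionOnto ∘L star V ∘L HC.subtypeL) := by
  -- `star V` fixes `HCᗮ` pointwise
  have hrange : ∀ y : H, (V - 1) y ∈ HC := fun y =>
    hHV (Submodule.le_topologicalClosure _ (LinearMap.mem_range_self _ y))
  have hVstar : ∀ x ∈ HCᗮ, (star V) x = x := by
    intro x hx
    have h0 : (star V) x - x = (star (V - (1 : H →L[ℂ] H))) x := by
      simp [star_sub]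
    have : (star (V - (1 : H →L[ℂ] H))) x = 0 := by
      rw [ContinuousLinearMap.star_eq_adjoint]
      apply ext_inner_right ℂ
      intro y
      rw [ContinuousLinearMap.adjoint_inner_left]
      simpa using (Submodule.mem_orthogonal' HC x).mp hx _ (hrange y)
    have := h0.trans this
    linear_combination (norm := module) this
  -- `V` fixes `HCᗮ` pointwise
  have hVfix : ∀ x ∈ HCᗮ, V x = x := by
    intro x hx
    have h1 : V ((star V) x) = V x := by rw [hVstar x hx]
    have h2 : V ((star V) x) = x := by
      have : (V * star V) x = (1 : H →L[ℂ] H) x := by rw [hV.2]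
      simpa using this
    rw [hVstar x hx] at h2
    exact h2
  -- `HC` is invariant under `V` and `star V`
  have hVinv : ∀ v ∈ HC, V v ∈ HC := by
    intro v hv
    rw [← HC.orthogonal_orthogonal, Submodule.mem_orthogonal]
    intro x hx
    have h : (inner ℂ x (V v) : ℂ) = inner ℂ ((star V) x) v := by
      rw [ContinuousLinearMap.star_eq_adjoint, ContinuousLinearMap.adjoint_inner_left]
    rw [h, hVstar x hx]
    exact (Submodule.mem_orthogonal' HC x).mp hx v hv
  have hVstarinv : ∀ v ∈ HC, (star V) v ∈ HC := by
    intro v hv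
    rw [← HC.orthogonal_orthogonal, Submodule.mem_orthogonal]
    intro x hx
    have h : (inner ℂ x ((star V) v) : ℂ) = inner ℂ (V x) v := by
      rw [ContinuousLinearMap.star_eq_adjoint, ContinuousLinearMap.adjoint_inner_right]
    rw [h, hVfix x hx]
    exact (Submodule.mem_orthogonal' HC x).mp hx v hv
  refine ⟨hVinv, ?_⟩
  intro z hz
  set Pperp : H →L[ℂ] H := 1 - orthProj HC with hPperp
  -- `V ∘ Pperp = Pperp`
  have hVP : V * Pperp = Pperp := by
    ext x
    have hmem : Pperp x ∈ HCᗮ := by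
      simp only [hPperp, orthProj, ContinuousLinearMap.sub_apply, ContinuousLinearMap.one_apply,
        ContinuousLinearMap.coe_comp', Function.comp_apply, Submodule.coe_subtypeL',
        Submodule.coe_subtype]
      exact HC.sub_starProjection_mem_orthogonal x
    exact hVfix _ hmem
  -- norm bound on `Pperp`
  have hPnorm : ∀ x : H, ‖Pperp x‖ ≤ ‖x‖ := by
    intro x
    have : Pperp x = (HCᗮ.orthogonalProjectionOnto x : H) := by
      simp [hPperp, orthProj]
    rw [this]
    calc ‖(HCᗮ.orthogonalProjectionOnto x : H)‖ ≤ ‖HCᗮ.orthogonalProjectionOnto‖ * ‖x‖ :=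
          (HCᗮ.orthogonalProjectionOnto).le_opNorm x
      _ ≤ 1 * ‖x‖ := by
          gcongr; exact Submodule.orthogonalProjectionOnto_norm_le HCᗮ
      _ = ‖x‖ := one_mul _
  -- `W - z • Pperp` is a unit
  set A : H →L[ℂ] H := W - z • Pperp with hA
  have hAfact : A = W * (1 - star W * (z • Pperp)) := by
    rw [mul_sub, mul_one, ← mul_assoc, hW.2, one_mul]
  have hsmall : ‖star W * (z • Pperp)‖ < 1 := by
    rw [CStarRing.norm_mem_unitary_mul (z • Pperp) (Unitary.star_mem hW)]
    calc ‖z • Pperp‖ ≤ ‖z‖ * ‖Pperp‖ := norm_smul_le z Pperp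
      _ ≤ ‖z‖ * 1 := by
          gcongr
          exact ContinuousLinearMap.opNorm_le_bound _ zero_le_one (by simpa using hPnorm)
      _ < 1 := by simpa using hz
  have hAunit : IsUnit A := by
    rw [hAfact]
    exact (⟨W, star W, hW.2, hW.1⟩ : (H →L[ℂ] H)ˣ).isUnit.mul (isUnit_one_sub_of_norm_lt_one hsmall)
  -- the shifted operator factors as `V * A`
  have hfact : V ∘L W - z • ((1 : H →L[ℂ] H) - orthProj HC) = V * A := by
    rw [hA, mul_sub]
    congr 1
    rw [mul_smul_comm, hVP]
  -- units
  let uV : (H →L[ℂ] H)ˣ := ⟨V, star V, hV.2, hV.1⟩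
  have hinv : Ring.inverse (V ∘L W - z • ((1 : H →L[ℂ] H) - orthProj HC)) =
      Ring.inverse A * star V := by
    rw [hfact]
    have h1 : V * A = ((uV * hAunit.unit : (H →L[ℂ] H)ˣ) : H →L[ℂ] H) := by
      simp [uV]
    rw [h1, Ring.inverse_unit, mul_inv_rev, Units.val_mul, ← Ring.inverse_unit hAunit.unit,
      IsUnit.unit_spec]
    rfl
  -- conclude
  unfold schurAt
  rw [hinv]
  ext v
  have hmem : (star V) (v : H) ∈ HC := hVstarinv _ v.2
  simp only [ContinuousLinearMap.coe_comp', Function.comp_apply, Submodule.coe_subtypeL',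
    Submodule.coe_subtype, ContinuousLinearMap.mul_apply]
  have hsp : ((HC.orthogonalProjectionOnto ((star V) (v : H))) : H) = (star V) v :=
    HC.starProjection_eq_self_iff.mpr hmem
  rw [hsp]
end
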